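/- arXiv:2408.02607 — 3 statements merged into one kernel-verified Lean document; each statement's English description precedes it below -/
import Mathlib

section
/- Let n ≥ 1, K ⊆ {1,…,n}, and 1 ≤ i ≤ n. Then w_K(i) < 0 if and only if i + #K > n. -/
/-- The signed permutation `s_i` of `ℤ`, swapping `i ↔ i+1` and `-i ↔ -(i+1)`. -/
def sPerm (i : ℤ) : Equiv.Perm ℤ :=
  Equiv.swap i (i + 1) * Equiv.swap (-i) (-(i + 1))

/-- The permutation `t` of `ℤ`, swapping `n ↔ -n`. -/
def tPerm (n : ℕ) : Equiv.Perm ℤ :=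
  Equiv.swap (n : ℤ) (-(n : ℤ))

/-- `c_k = s_k s_{k+1} ⋯ s_{n-1} t`. -/
def cPerm (n k : ℕ) : Equiv.Perm ℤ :=
  (((List.range (n - k)).map (fun j => sPerm ((k : ℤ) + (j : ℤ)))).prod) * tPerm n

/-- `w_K`: product of the `c_k`, `k ∈ K`, in decreasing order of `k`. -/
def wPerm (n : ℕ) (K : Finset ℕ) : Equiv.Perm ℤ :=
  (((K.sort (· ≤ ·)).reverse).map (cPerm n)).prod

/-!
The factor `c_k` fixes every `x` with `|x| < k`, sends `x ↦ x + 1` for `k ≤ x < n`, and sends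
`n ↦ -k`, a point fixed by every `c_{k'}` with `k < k' ≤ n`. Since `w_K` applies its factors in
increasing order of `k`, induct on `K` from its minimum `k`: if `i < k` then `w_K` fixes `i` and
`#K ≤ n - i`; if `k ≤ i < n` then `w_K(i) = w_{K ∖ {k}}(i + 1)`; and `w_K(n) = -k`.
-/

def sProd (k m : ℕ) : Equiv.Perm ℤ :=
  ((List.range m).map (fun j => sPerm ((k : ℤ) + (j : ℤ)))).prod

lemma cPerm_eq_sProd_mul (n k : ℕ) : cPerm n k = sProd k (n - k) * tPerm n := rfl

lemma sPerm_apply_of_ne {j x : ℤ} (h₁ : x ≠ j) (h₂ : x ≠ j + 1) (h₃ : x ≠ -j)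
    (h₄ : x ≠ -(j + 1)) : sPerm j x = x := by
  simp only [sPerm, Equiv.Perm.mul_apply,
    Equiv.swap_apply_of_ne_of_ne h₃ h₄, Equiv.swap_apply_of_ne_of_ne h₁ h₂]

lemma sPerm_apply_self {j : ℤ} (hj : 1 ≤ j) : sPerm j j = j + 1 := by
  simp only [sPerm, Equiv.Perm.mul_apply,
    Equiv.swap_apply_of_ne_of_ne (show j ≠ -j by omega) (show j ≠ -(j + 1) by omega),
    Equiv.swap_apply_left]

lemma sPerm_apply_neg_add_one {j : ℤ} (hj : 1 ≤ j) : sPerm j (-(j + 1)) = -j := by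
  simp only [sPerm, Equiv.Perm.mul_apply, Equiv.swap_apply_right,
    Equiv.swap_apply_of_ne_of_ne (show -j ≠ j by omega) (show -j ≠ j + 1 by omega)]

lemma sProd_zero (k : ℕ) : sProd k 0 = 1 := rfl

lemma sProd_succ (k m : ℕ) : sProd k (m + 1) = sProd k m * sPerm ((k : ℤ) + (m : ℤ)) := by
  simp [sProd, List.range_succ]

lemma sProd_apply_of_natAbs_lt {k m : ℕ} {x : ℤ} (hx : x.natAbs < k) : sProd k m x = x := by
  induction m with
  | zero => rfl
  | succ m ih =>
    rw [sProd_succ, Equiv.Perm.mul_apply,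
      sPerm_apply_of_ne (by omega) (by omega) (by omega) (by omega), ih]

lemma sProd_apply_of_add_lt {k m : ℕ} {x : ℤ} (h : (k : ℤ) + m < x) : sProd k m x = x := by
  induction m with
  | zero => rfl
  | succ m ih =>
    push_cast at h
    rw [sProd_succ, Equiv.Perm.mul_apply,
      sPerm_apply_of_ne (by omega) (by omega) (by omega) (by omega), ih (by omega)]

lemma sProd_apply_of_le_of_lt {k m : ℕ} {x : ℤ} (hk : 1 ≤ k) (h₁ : (k : ℤ) ≤ x)
    (h₂ : x < (k : ℤ) + m) : sProd k m x = x + 1 := by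
  induction m with
  | zero => omega
  | succ m ih =>
    push_cast at h₂
    rw [sProd_succ, Equiv.Perm.mul_apply]
    obtain h | rfl : x < (k : ℤ) + m ∨ x = (k : ℤ) + m := by omega
    · rw [sPerm_apply_of_ne (by omega) (by omega) (by omega) (by omega), ih h]
    · rw [sPerm_apply_self (by omega), sProd_apply_of_add_lt (by omega)]

lemma sProd_apply_neg_add {k : ℕ} (m : ℕ) (hk : 1 ≤ k) :
    sProd k m (-((k : ℤ) + m)) = -(k : ℤ) := by
  induction m with
  | zero => simp [sProd_zero]
  | succ m ih =>
    rw [sProd_succ, Equiv.Perm.mul_apply, Nat.cast_succ, ← add_assoc,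
      sPerm_apply_neg_add_one (by omega), ih]

lemma tPerm_apply_of_ne {n : ℕ} {x : ℤ} (h₁ : x ≠ n) (h₂ : x ≠ -(n : ℤ)) : tPerm n x = x :=
  Equiv.swap_apply_of_ne_of_ne h₁ h₂

lemma cPerm_apply_of_natAbs_lt {n k : ℕ} {x : ℤ} (hkn : k ≤ n) (hx : x.natAbs < k) :
    cPerm n k x = x := by
  rw [cPerm_eq_sProd_mul, Equiv.Perm.mul_apply, tPerm_apply_of_ne (by omega) (by omega),
    sProd_apply_of_natAbs_lt hx]

lemma cPerm_apply_of_le_of_lt {n k : ℕ} {x : ℤ} (hk : 1 ≤ k) (hkn : k ≤ n) (h₁ : (k : ℤ) ≤ x)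
    (h₂ : x < n) : cPerm n k x = x + 1 := by
  rw [cPerm_eq_sProd_mul, Equiv.Perm.mul_apply, tPerm_apply_of_ne (by omega) (by omega),
    sProd_apply_of_le_of_lt hk h₁ (by omega)]

lemma cPerm_apply_self {n k : ℕ} (hk : 1 ≤ k) (hkn : k ≤ n) : cPerm n k n = -(k : ℤ) := by
  rw [cPerm_eq_sProd_mul, Equiv.Perm.mul_apply, tPerm, Equiv.swap_apply_left,
    show -(n : ℤ) = -((k : ℤ) + ((n - k : ℕ) : ℤ)) by omega, sProd_apply_neg_add _ hk]

lemma wPerm_empty (n : ℕ) : wPerm n ∅ = 1 := by simp [wPerm]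

lemma wPerm_insert_of_lt {n a : ℕ} {K : Finset ℕ} (ha : ∀ k ∈ K, a < k) :
    wPerm n (insert a K) = wPerm n K * cPerm n a := by
  have haK : a ∉ K := fun h => lt_irrefl a (ha a h)
  simp [wPerm, Finset.sort_insert _ (fun k hk => (ha k hk).le) haK]

lemma wPerm_apply_of_natAbs_le {n m : ℕ} {K : Finset ℕ} {x : ℤ} (hK : ∀ k ∈ K, m < k ∧ k ≤ n)
    (hx : x.natAbs ≤ m) : wPerm n K x = x := by
  induction K using Finset.induction_on_min with
  | empty => rw [wPerm_empty, Equiv.Perm.one_apply]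
  | insert a K _ ih =>
    simp only [Finset.forall_mem_insert] at hK
    rw [wPerm_insert_of_lt ‹_›, Equiv.Perm.mul_apply,
      cPerm_apply_of_natAbs_lt hK.1.2 (by omega), ih hK.2]

theorem wPerm_apply_neg_iff {n : ℕ} {K : Finset ℕ} (hK : K ⊆ Finset.Icc 1 n) {i : ℕ}
    (hi : i ≤ n) : wPerm n K i < 0 ↔ n < i + K.card := by
  induction K using Finset.induction_on_min generalizing i with
  | empty => simp only [wPerm_empty, Equiv.Perm.one_apply, Finset.card_empty]; omega
  | insert k K hkK ih =>
    have hkK' : k ∉ K := fun h => lt_irrefl k (hkK k h)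
    have hK' : K ⊆ Finset.Icc 1 n := (Finset.subset_insert k K).trans hK
    obtain ⟨hk, hkn⟩ := Finset.mem_Icc.mp (hK (Finset.mem_insert_self k K))
    have hKbounds : ∀ k' ∈ K, k < k' ∧ k' ≤ n :=
      fun k' hk' => ⟨hkK k' hk', (Finset.mem_Icc.mp (hK' hk')).2⟩
    rw [wPerm_insert_of_lt hkK, Equiv.Perm.mul_apply, Finset.card_insert_of_notMem hkK']
    obtain hik | hik | rfl : i < k ∨ k ≤ i ∧ i < n ∨ i = n := by omega
    · have hcard : K.card ≤ n - k := by
        simpa using Finset.card_le_card fun k' hk' => Finset.mem_Icc.mpr (hKbounds k' hk')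
      rw [cPerm_apply_of_natAbs_lt hkn (by omega),
        wPerm_apply_of_natAbs_le hKbounds (by omega)]
      omega
    · rw [cPerm_apply_of_le_of_lt hk hkn (by omega) (by omega), ← Nat.cast_succ,
        ih hK' (by omega)]
      omega
    · rw [cPerm_apply_self hk hkn,
        wPerm_apply_of_natAbs_le hKbounds (by omega)]
      omega

theorem stmt1_general (n : ℕ) (K : Finset ℕ) (hK : K ⊆ Finset.Icc 1 n)
    (i : ℕ) (hi2 : i ≤ n) :
    wPerm n K (i : ℤ) < 0 ↔ n < i + K.card :=
  wPerm_apply_neg_iff hK hi2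

theorem stmt1 (n : ℕ) (hn : 1 ≤ n) (K : Finset ℕ) (hK : K ⊆ Finset.Icc 1 n)
    (i : ℕ) (hi1 : 1 ≤ i) (hi2 : i ≤ n) :
    wPerm n K (i : ℤ) < 0 ↔ n < i + K.card :=
  stmt1_general n K hK i hi2
end

section
/- Let n ≥ 1, K ⊆ {1,…,n}, and 1 ≤ j ≤ n. Then the number of indices i with 1 ≤ i ≤ n and 0 ≤ w_K(i) ≤ j equals j − #(K ∩ {1,…,j}). -/
/-!
Each `c_k` is the signed cycle `k → k+1 → ⋯ → n → -k → -(k+1) → ⋯ → -n → k`. If `a` exceeds every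
element of `K`, then `c_a` fixes the integers of absolute value below `a`, shifts `a, …, n-1` up by
one and sends `n` to `-a`; hence it maps `{1,…,n}` with the elements of `K` negated onto the same set
with `a` negated as well. Inducting on the maximum of `K`, `w_K` maps `{1,…,n}` onto
`({1,…,n} \ K) ∪ -K`, whose elements in `[0, j]` are exactly those of `{1,…,j} \ K`.
-/

open Finset

lemma cPerm_eq (n k : ℕ) :
    cPerm n k = ((List.range (n - k)).map fun j : ℕ => sPerm (k + j)).prod * tPerm n := by
  simp only [cPerm, List.pure_def, List.bind_eq_flatMap, ← List.map_eq_flatMap, List.map_map,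
    mul_left_inj]
  rfl

lemma cPerm_self (n : ℕ) : cPerm n n = tPerm n := by
  simp [cPerm_eq]

lemma cPerm_eq_sPerm_mul {n k : ℕ} (h : k < n) : cPerm n k = sPerm k * cPerm n (k + 1) := by
  rw [cPerm_eq, cPerm_eq, show n - k = n - (k + 1) + 1 by omega, List.range_succ_eq_map]
  simp only [List.map_cons, List.map_map, List.prod_cons, mul_assoc, Nat.cast_zero, add_zero]
  congr 4
  funext j
  simp only [Function.comp_apply, Nat.cast_succ]
  ring_nf

lemma sPerm_apply {k : ℤ} (hk : 0 < k) (x : ℤ) :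
    sPerm k x = if x = k then k + 1 else if x = k + 1 then k
      else if x = -k then -(k + 1) else if x = -(k + 1) then -k else x := by
  simp only [sPerm, Equiv.Perm.mul_apply, Equiv.swap_apply_def]
  split_ifs <;> omega

def cycleMap (n k x : ℤ) : ℤ :=
  if x = n then -k else if x = -n then k
  else if k ≤ x ∧ x < n then x + 1 else if -n < x ∧ x ≤ -k then x - 1 else x

lemma cPerm_apply {n k : ℕ} (hk : 0 < k) (hkn : k ≤ n) (x : ℤ) :
    cPerm n k x = cycleMap n k x := by
  obtain ⟨d, rfl⟩ := Nat.exists_eq_add_of_le hkn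
  induction d generalizing k with
  | zero =>
    rw [add_zero, cPerm_self, tPerm, Equiv.swap_apply_def, cycleMap]
    split_ifs <;> omega
  | succ d ih =>
    rw [cPerm_eq_sPerm_mul (by omega), Equiv.Perm.mul_apply,
      show k + (d + 1) = k + 1 + d by ring, ih (by omega) (by omega),
      sPerm_apply (by omega), cycleMap, cycleMap]
    push_cast
    split_ifs <;> omega

lemma reverse_sort_le_eq_sort_ge (s : Finset ℕ) : (s.sort (· ≤ ·)).reverse = s.sort (· ≥ ·) :=
  List.Perm.eq_of_pairwise' (r := fun a b : ℕ => a ≥ b)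
    (List.pairwise_reverse.2 (pairwise_sort _ _)) (pairwise_sort _ _)
    ((List.reverse_perm _).trans ((sort_perm_toList _ _).trans (sort_perm_toList _ _).symm))

lemma wPerm_insert (n : ℕ) {a : ℕ} {K : Finset ℕ} (h : ∀ b ∈ K, b < a) :
    wPerm n (insert a K) = cPerm n a * wPerm n K := by
  rw [wPerm, wPerm, reverse_sort_le_eq_sort_ge, reverse_sort_le_eq_sort_ge,
    sort_insert _ (fun b hb => (h b hb).le) (fun ha => (h a ha).false)]
  simp

def signedFlip (n : ℕ) (K : Finset ℕ) : Finset ℤ :=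
  (Icc 1 n \ K).image Nat.cast ∪ K.image fun k : ℕ => -(k : ℤ)

lemma card_signedFlip {n : ℕ} {K : Finset ℕ} (hK : K ⊆ Icc 1 n) : #(signedFlip n K) = n := by
  have hdisj :
      Disjoint ((Icc 1 n \ K).image (Nat.cast : ℕ → ℤ)) (K.image fun k : ℕ => -(k : ℤ)) := by
    simp only [disjoint_left, mem_image, mem_sdiff, mem_Icc]
    rintro _ ⟨m, ⟨⟨hm, -⟩, -⟩, rfl⟩ ⟨k, -, hk⟩
    omega
  rw [signedFlip, card_union_of_disjoint hdisj, card_image_of_injective _ Nat.cast_injective,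
    card_image_of_injective K fun _ _ h => by simpa using h,
    card_sdiff_add_card_eq_card hK, Nat.card_Icc, Nat.add_sub_cancel]

lemma cPerm_mem_signedFlip {n a : ℕ} {s : Finset ℕ} (ha : 0 < a) (han : a ≤ n)
    (hs : ∀ b ∈ s, b < a) {z : ℤ} (hz : z ∈ signedFlip n s) :
    cPerm n a z ∈ signedFlip n (insert a s) := by
  simp only [signedFlip, mem_union, mem_image, mem_sdiff, mem_Icc, mem_insert] at hz ⊢
  rw [cPerm_apply ha han, cycleMap]
  rcases hz with ⟨m, ⟨⟨hm1, hmn⟩, hms⟩, rfl⟩ | ⟨b, hb, rfl⟩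
  · rcases lt_or_ge m a with hma | ham
    · left
      refine ⟨m, ⟨⟨hm1, hmn⟩, ?_⟩, by split_ifs <;> omega⟩
      rintro (rfl | hm)
      exacts [hma.false, hms hm]
    rcases hmn.lt_or_eq with hmn | rfl
    · left
      refine ⟨m + 1, ⟨⟨by omega, hmn⟩, ?_⟩, by push_cast; split_ifs <;> omega⟩
      rintro (hm | hm)
      exacts [by omega, (hs _ hm).not_ge (by omega)]
    · right
      exact ⟨a, Or.inl rfl, by split_ifs <;> omega⟩
  · have := hs b hb
    right
    exact ⟨b, Or.inr hb, by split_ifs <;> omega⟩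

lemma image_cPerm_signedFlip {n a : ℕ} {s : Finset ℕ} (hs : ∀ b ∈ s, b < a)
    (hsub : insert a s ⊆ Icc 1 n) :
    (signedFlip n s).image (cPerm n a) = signedFlip n (insert a s) := by
  have ha := mem_Icc.1 (hsub (mem_insert_self a s))
  refine eq_of_subset_of_card_le ?_ ?_
  · simp only [subset_iff, mem_image]
    rintro _ ⟨z, hz, rfl⟩
    exact cPerm_mem_signedFlip ha.1 ha.2 hs hz
  · rw [card_image_of_injective _ (cPerm n a).injective, card_signedFlip hsub,
      card_signedFlip ((subset_insert a s).trans hsub)]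

lemma image_wPerm_Icc {n : ℕ} {K : Finset ℕ} (hK : K ⊆ Icc 1 n) :
    (Icc 1 n).image (fun i : ℕ => wPerm n K i) = signedFlip n K := by
  induction K using Finset.induction_on_max with
  | empty => simp [wPerm, signedFlip]
  | insert a s hs ih =>
    rw [wPerm_insert n hs, ← image_cPerm_signedFlip hs hK,
      ← ih ((subset_insert a s).trans hK), image_image]
    rfl

lemma signedFlip_filter_nonneg_le {n j : ℕ} {K : Finset ℕ} (hK : K ⊆ Icc 1 n) (hjn : j ≤ n) :
    (signedFlip n K).filter (fun z : ℤ => 0 ≤ z ∧ z ≤ j) = (Icc 1 j \ K).image Nat.cast := by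
  ext z
  simp only [signedFlip, mem_filter, mem_union, mem_image, mem_sdiff, mem_Icc]
  constructor
  · rintro ⟨⟨m, ⟨⟨hm1, -⟩, hmK⟩, rfl⟩ | ⟨k, hk, rfl⟩, hz0, hzj⟩
    · exact ⟨m, ⟨⟨hm1, by omega⟩, hmK⟩, rfl⟩
    · have := (mem_Icc.1 (hK hk)).1
      omega
  · rintro ⟨m, ⟨⟨hm1, hmj⟩, hmK⟩, rfl⟩
    exact ⟨Or.inl ⟨m, ⟨⟨hm1, hmj.trans hjn⟩, hmK⟩, rfl⟩, by omega, by omega⟩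

theorem stmt3_general (n : ℕ) (K : Finset ℕ) (hK : K ⊆ Finset.Icc 1 n)
    (j : ℕ) (hj2 : j ≤ n) :
    (((Finset.Icc 1 n).filter
        (fun i : ℕ => 0 ≤ wPerm n K (i : ℤ) ∧ wPerm n K (i : ℤ) ≤ (j : ℤ))).card : ℤ)
      = (j : ℤ) - ((K ∩ Finset.Icc 1 j).card : ℤ) := by
  have hinj : Function.Injective fun i : ℕ => wPerm n K i :=
    (wPerm n K).injective.comp Nat.cast_injective
  have hcount : #((Icc 1 n).filter fun i : ℕ => 0 ≤ wPerm n K i ∧ wPerm n K i ≤ j)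
      = #(Icc 1 j \ K) := by
    rw [← card_image_of_injective _ hinj, ← filter_image (p := fun z : ℤ => 0 ≤ z ∧ z ≤ j),
      image_wPerm_Icc hK, signedFlip_filter_nonneg_le hK hj2,
      card_image_of_injective _ Nat.cast_injective]
  have hle : #(K ∩ Icc 1 j) ≤ j := by
    simpa using card_le_card (inter_subset_right (s₁ := K) (s₂ := Icc 1 j))
  rw [hcount, card_sdiff, Nat.card_Icc, Nat.add_sub_cancel, Nat.cast_sub hle]

theorem stmt3 (n : ℕ) (hn : 1 ≤ n) (K : Finset ℕ) (hK : K ⊆ Finset.Icc 1 n)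
    (j : ℕ) (hj1 : 1 ≤ j) (hj2 : j ≤ n) :
    (((Finset.Icc 1 n).filter
        (fun i : ℕ => 0 ≤ wPerm n K (i : ℤ) ∧ wPerm n K (i : ℤ) ≤ (j : ℤ))).card : ℤ)
      = (j : ℤ) - ((K ∩ Finset.Icc 1 j).card : ℤ) :=
  stmt3_general n K hK j hj2
end

section
/- Let n ≥ 1 and set N = n(n+1)/2. The set Q̄ ∖ Q = {B : B is an n×n real matrix, Bᵀ = B, I − B·B is positive semi-definite, and I − B·B is not positive definite}, with the topology induced from the space of n×n real matrices, is homeomorphic to a sphere of dimension N − 1 (the unit sphere in ℝ^N). -/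
/-! For symmetric `B` one has `xᵀ (1 - B * B) x = ‖x‖² - ‖B x‖²`, so `1 - B * B` is positive
semidefinite iff the operator norm of `B` is at most `1`, and, since that norm is attained on the
compact unit ball, positive definite iff it is less than `1`. Hence `Q̄ ∖ Q` is the unit sphere of
the operator norm on the space of symmetric matrices, which has dimension `n (n + 1) / 2`, and
radial projection maps it homeomorphically onto the Euclidean unit sphere. -/

open Matrix WithLp Metric NormedSpace

section RadialProjection

variable {X E F : Type*} [TopologicalSpace X] [NormedAddCommGroup E] [NormedSpace ℝ E]
  [NormedAddCommGroup F] [NormedSpace ℝ F]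

theorem Continuous.normalize {f : X → E} (hf : Continuous f) (h0 : ∀ x, f x ≠ 0) :
    Continuous fun x => normalize (f x) :=
  (hf.norm.inv₀ fun x => norm_ne_zero_iff.mpr (h0 x)).smul hf

theorem ContinuousLinearEquiv.normalize_symm_normalize (e : E ≃L[ℝ] F) {x : E} (hx : ‖x‖ = 1) :
    normalize (e.symm (normalize (e x))) = x := by
  have hex : e x ≠ 0 := e.map_ne_zero_iff.mpr (norm_ne_zero_iff.mp (hx ▸ one_ne_zero))
  change normalize (e.symm (‖e x‖⁻¹ • e x)) = x
  rw [map_smul, e.symm_apply_apply,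
    normalize_smul_of_pos (inv_pos.mpr (norm_pos_iff.mpr hex)),
    normalize_eq_self_of_norm_eq_one hx]

theorem normalize_mem_sphere {x : E} (hx : x ≠ 0) : normalize x ∈ sphere (0 : E) 1 :=
  mem_sphere_zero_iff_norm.mpr (norm_normalize hx)

noncomputable def ContinuousLinearEquiv.unitSphereHomeomorph (e : E ≃L[ℝ] F) :
    sphere (0 : E) 1 ≃ₜ sphere (0 : F) 1 where
  toFun x :=
    ⟨normalize (e x), normalize_mem_sphere (e.map_ne_zero_iff.mpr (ne_zero_of_mem_unit_sphere x))⟩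
  invFun y :=
    ⟨normalize (e.symm y),
      normalize_mem_sphere (e.symm.map_ne_zero_iff.mpr (ne_zero_of_mem_unit_sphere y))⟩
  left_inv x := Subtype.ext (e.normalize_symm_normalize (mem_sphere_zero_iff_norm.mp x.2))
  right_inv y := Subtype.ext (e.symm.normalize_symm_normalize (mem_sphere_zero_iff_norm.mp y.2))
  continuous_toFun := ((e.continuous.comp continuous_subtype_val).normalize fun x =>
    e.map_ne_zero_iff.mpr (ne_zero_of_mem_unit_sphere x)).subtype_mk _
  continuous_invFun := ((e.symm.continuous.comp continuous_subtype_val).normalize fun y =>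
    e.symm.map_ne_zero_iff.mpr (ne_zero_of_mem_unit_sphere y)).subtype_mk _

def Submodule.interSphereHomeomorph {R : Type*} [Ring R] [Module R E] (p : Submodule R E)
    (r : ℝ) :
    (p ∩ sphere (0 : E) r : Set E) ≃ₜ sphere (0 : p) r where
  toFun x := ⟨⟨x, x.2.1⟩, mem_sphere_zero_iff_norm.mpr (mem_sphere_zero_iff_norm.mp x.2.2)⟩
  invFun x := ⟨x, x.1.2, mem_sphere_zero_iff_norm.mpr (mem_sphere_zero_iff_norm.mp x.2)⟩
  left_inv _ := rfl
  right_inv _ := rfl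
  continuous_toFun := (continuous_subtype_val.subtype_mk _).subtype_mk _
  continuous_invFun := (continuous_subtype_val.comp continuous_subtype_val).subtype_mk _

end RadialProjection

namespace Matrix

variable (R n : Type*) [CommRing R] [Fintype n]

def symmetricSubmodule : Submodule R (Matrix n n R) where
  carrier := {A | A.IsSymm}
  add_mem' := IsSymm.add
  zero_mem' := isSymm_zero
  smul_mem' c _ h := h.smul c

def symmetricSubmoduleEquivSym2 : symmetricSubmodule R n ≃ₗ[R] (Sym2 n → R) where
  toFun A := Sym2.lift ⟨fun i j => A.1 i j, fun i j => (IsSymm.apply A.2 i j).symm⟩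
  map_add' A B := funext fun z => z.ind fun _ _ => rfl
  map_smul' c A := funext fun z => z.ind fun _ _ => rfl
  invFun f := ⟨of fun i j => f s(i, j), IsSymm.ext fun i j => by simp [Sym2.eq_swap]⟩
  left_inv _ := rfl
  right_inv f := funext fun z => z.ind fun _ _ => rfl

theorem finrank_symmetricSubmodule [Nontrivial R] :
    Module.finrank R (symmetricSubmodule R n) = Fintype.card n * (Fintype.card n + 1) / 2 := by
  rw [(symmetricSubmoduleEquivSym2 R n).finrank_eq, Module.finrank_fintype_fun_eq_card, Sym2.card,
    Nat.choose_two_right, Nat.add_sub_cancel, Nat.mul_comm]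

end Matrix

namespace ContinuousLinearMap

variable {𝕜 E F : Type*} [DenselyNormedField 𝕜] [NormedAddCommGroup E] [NormedAddCommGroup F]
  [NormedSpace 𝕜 E] [NormedSpace 𝕜 F] [ProperSpace E]

theorem exists_norm_le_one_norm_apply_eq_opNorm (f : E →L[𝕜] F) :
    ∃ x, ‖x‖ ≤ 1 ∧ ‖f x‖ = ‖f‖ := by
  obtain ⟨x, hx, hmax⟩ := (isCompact_closedBall (0 : E) 1).exists_isMaxOn
    (nonempty_closedBall.mpr zero_le_one) f.continuous.norm.continuousOn
  rw [mem_closedBall_zero_iff] at hx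
  refine ⟨x, hx, le_antisymm ?_ ?_⟩
  · simpa using f.le_opNorm_of_le hx
  · refine le_of_forall_lt fun r hr => ?_
    obtain ⟨y, hy, hry⟩ := f.exists_lt_apply_of_lt_opNorm hr
    exact hry.trans_le (hmax (mem_closedBall_zero_iff.mpr hy.le))

theorem opNorm_lt_one_iff (f : E →L[𝕜] F) : ‖f‖ < 1 ↔ ∀ x, x ≠ 0 → ‖f x‖ < ‖x‖ := by
  refine ⟨fun h x hx => ?_, fun h => ?_⟩
  · calc ‖f x‖ ≤ ‖f‖ * ‖x‖ := f.le_opNorm x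
      _ < 1 * ‖x‖ := by gcongr
      _ = ‖x‖ := one_mul _
  · obtain ⟨x, hx, hfx⟩ := f.exists_norm_le_one_norm_apply_eq_opNorm
    rcases eq_or_ne x 0 with rfl | hx0
    · simp [← hfx]
    · exact hfx ▸ (h x hx0).trans_le hx

end ContinuousLinearMap

section L2Operator

/- The L2 operator norm on matrices is built so that its topology is definitionally the entrywise
one, so the homeomorphisms below are homeomorphisms for the usual topology on matrices. -/
open scoped ComplexOrder Matrix.Norms.L2Operator

namespace Matrix

variable {𝕜 n : Type*} [RCLike 𝕜] [Fintype n] [DecidableEq n]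

theorem star_dotProduct_one_sub_conjTranspose_mul_self_mulVec (A : Matrix n n 𝕜)
    (x : EuclideanSpace 𝕜 n) :
    star x.ofLp ⬝ᵥ (1 - Aᴴ * A) *ᵥ x.ofLp =
      ((‖x‖ ^ 2 - ‖toEuclideanCLM (n := n) (𝕜 := 𝕜) A x‖ ^ 2 : ℝ) : 𝕜) := by
  rw [RCLike.ofReal_sub, RCLike.ofReal_pow, RCLike.ofReal_pow, ← inner_self_eq_norm_sq_to_K,
    ← inner_self_eq_norm_sq_to_K, EuclideanSpace.inner_eq_star_dotProduct,
    EuclideanSpace.inner_eq_star_dotProduct, ofLp_toEuclideanCLM, sub_mulVec, one_mulVec,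
    dotProduct_sub, ← mulVec_mulVec, dotProduct_mulVec, ← star_mulVec, dotProduct_comm,
    dotProduct_comm (star _)]

theorem isHermitian_one_sub_conjTranspose_mul_self (A : Matrix n n 𝕜) :
    (1 - Aᴴ * A).IsHermitian :=
  isHermitian_one.sub (isHermitian_conjTranspose_mul_self A)

theorem posSemidef_one_sub_conjTranspose_mul_self_iff (A : Matrix n n 𝕜) :
    (1 - Aᴴ * A).PosSemidef ↔ ‖A‖ ≤ 1 := by
  rw [posSemidef_iff_dotProduct_mulVec, cstar_norm_def,
    ContinuousLinearMap.opNorm_le_iff zero_le_one]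
  simp only [isHermitian_one_sub_conjTranspose_mul_self, true_and, one_mul,
    ← (WithLp.equiv 2 (n → 𝕜)).forall_congr_right, WithLp.equiv_apply,
    star_dotProduct_one_sub_conjTranspose_mul_self_mulVec, RCLike.ofReal_nonneg, sub_nonneg,
    sq_le_sq₀ (norm_nonneg _) (norm_nonneg _)]

theorem posDef_one_sub_conjTranspose_mul_self_iff (A : Matrix n n 𝕜) :
    (1 - Aᴴ * A).PosDef ↔ ‖A‖ < 1 := by
  rw [posDef_iff_dotProduct_mulVec, cstar_norm_def, ContinuousLinearMap.opNorm_lt_one_iff]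
  simp only [isHermitian_one_sub_conjTranspose_mul_self, true_and,
    ← (WithLp.equiv 2 (n → 𝕜)).forall_congr_right, WithLp.equiv_apply, ne_eq, WithLp.ofLp_eq_zero,
    star_dotProduct_one_sub_conjTranspose_mul_self_mulVec, RCLike.ofReal_pos, sub_pos,
    sq_lt_sq₀ (norm_nonneg _) (norm_nonneg _)]

theorem setOf_isSymm_posSemidef_not_posDef_eq :
    {B : Matrix n n ℝ | Bᵀ = B ∧ (1 - B * B).PosSemidef ∧ ¬(1 - B * B).PosDef} =
      (symmetricSubmodule ℝ n : Set (Matrix n n ℝ)) ∩ sphere 0 1 := by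
  ext B
  simp only [Set.mem_ofPred_eq, Set.mem_inter_iff, SetLike.mem_coe, mem_sphere_zero_iff_norm]
  refine and_congr_right fun hB => ?_
  have hBB : B * B = Bᴴ * B := by rw [conjTranspose_eq_transpose_of_trivial, hB]
  rw [hBB, posSemidef_one_sub_conjTranspose_mul_self_iff,
    posDef_one_sub_conjTranspose_mul_self_iff, not_lt, le_antisymm_iff]

noncomputable def symmetricUnitSphereHomeomorph (m : ℕ) :
    ((symmetricSubmodule ℝ (Fin m) : Set (Matrix (Fin m) (Fin m) ℝ)) ∩ sphere 0 1 : Set _) ≃ₜ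
      sphere (0 : EuclideanSpace ℝ (Fin (m * (m + 1) / 2))) 1 :=
  ((symmetricSubmodule ℝ (Fin m)).interSphereHomeomorph 1).trans
    (LinearEquiv.ofFinrankEq _ _ (by simp [finrank_symmetricSubmodule])
      |>.toContinuousLinearEquiv.unitSphereHomeomorph)

end Matrix

end L2Operator

theorem stmt13_general (n : ℕ) :
    Nonempty
      (({B : Matrix (Fin n) (Fin n) ℝ |
            Bᵀ = B ∧ (1 - B * B).PosSemidef ∧ ¬(1 - B * B).PosDef} : Set _) ≃ₜ
        (Metric.sphere (0 : EuclideanSpace ℝ (Fin (n * (n + 1) / 2))) 1 : Set _)) :=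
  ⟨(Homeomorph.setCongr setOf_isSymm_posSemidef_not_posDef_eq).trans
    (symmetricUnitSphereHomeomorph n)⟩

theorem stmt13 (n : ℕ) (hn : 1 ≤ n) :
    Nonempty
      (({B : Matrix (Fin n) (Fin n) ℝ |
            Bᵀ = B ∧ (1 - B * B).PosSemidef ∧ ¬(1 - B * B).PosDef} : Set _) ≃ₜ
        (Metric.sphere (0 : EuclideanSpace ℝ (Fin (n * (n + 1) / 2))) 1 : Set _)) :=
  stmt13_general n
end
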